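/- Let ρ and τ be multiplicative representations of a Hom-Lie algebra L on (V,β) and (W,γ) that are nilpotent with nilindices n and m respectively (i.e. any composition of n values of ρ vanishes, and similarly for τ and m). Then the tensor product representation ρ⊗τ, given by (ρ⊗τ)(x) = ρ(x)⊗γ + β⊗τ(x), is nilpotent of index at most n+m−1: for any x₁,…,x_{n+m−1} ∈ L, (ρ⊗τ)(x₁)∘⋯∘(ρ⊗τ)(x_{n+m−1}) = 0. -/

import Mathlib

open TensorProduct

variable {K L V W : Type*} [Field K] [AddCommGroup L] [Module K L]
  [AddCommGroup V] [Module K V] [AddCommGroup W] [Module K W]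

/-- The tensor product of two representations of a Hom-Lie algebra:
`(ρ⊗τ)(x) = ρ(x)⊗γ + β⊗τ(x)`. -/
noncomputable def tpRep (ρ : L →ₗ[K] Module.End K V) (τ : L →ₗ[K] Module.End K W)
    (β : Module.End K V) (γ : Module.End K W) (x : L) : Module.End K (V ⊗[K] W) :=
  TensorProduct.map (ρ x) γ + TensorProduct.map β (τ x)

/-!
Call an operator of the form `ρ(z₁) ⋯ ρ(zₖ) c` a word of ρ-degree `k`. Left multiplication by
`ρ(x)` raises the degree by one, and, by multiplicativity, left multiplication by `β` keeps it
(`β` is pushed to the right through the ρ-factors, twisting their arguments by `α`). Expanding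
`(ρ⊗τ)(x₁) ⋯ (ρ⊗τ)(xₖ)` therefore gives a sum of terms `f ⊗ g` with `f`, `g` words whose degrees
add up to `k`. For `k = n + m - 1` each term has `f` of degree `≥ n` or `g` of degree `≥ m`, so
it vanishes by nilpotency.
-/

section RepProdMul

variable {X M : Type*}

def repProdMul [Monoid M] (ρ : X → M) (k : ℕ) : Set M :=
  {f | ∃ zs : List X, zs.length = k ∧ ∃ c, f = (zs.map ρ).prod * c}

section Monoid

variable [Monoid M] {ρ : X → M}

lemma one_mem_repProdMul_zero : (1 : M) ∈ repProdMul ρ 0 :=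
  ⟨[], rfl, 1, by simp⟩

lemma mul_mem_repProdMul_succ {k : ℕ} {f : M} (x : X) (hf : f ∈ repProdMul ρ k) :
    ρ x * f ∈ repProdMul ρ (k + 1) := by
  obtain ⟨zs, rfl, c, rfl⟩ := hf
  exact ⟨x :: zs, rfl, c, by simp [mul_assoc]⟩

lemma mul_prod_map_eq_prod_map_comp_mul {α : X → X} {β : M}
    (hβ : ∀ x, ρ (α x) * β = β * ρ x) (zs : List X) :
    β * (zs.map ρ).prod = (zs.map (ρ ∘ α)).prod * β := by
  induction zs with
  | nil => simp
  | cons z zs ih =>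
    simp only [List.map_cons, List.prod_cons, Function.comp_apply]
    rw [← mul_assoc, ← hβ, mul_assoc, ih, mul_assoc]

lemma mul_mem_repProdMul {α : X → X} {β : M} (hβ : ∀ x, ρ (α x) * β = β * ρ x)
    {k : ℕ} {f : M} (hf : f ∈ repProdMul ρ k) : β * f ∈ repProdMul ρ k := by
  obtain ⟨zs, rfl, c, rfl⟩ := hf
  refine ⟨zs.map α, List.length_map _, β * c, ?_⟩
  rw [← mul_assoc, mul_prod_map_eq_prod_map_comp_mul hβ, List.map_map, mul_assoc]

end Monoid

lemma eq_zero_of_mem_repProdMul [MonoidWithZero M] {ρ : X → M} {n k : ℕ}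
    (hn : ∀ xs : List X, xs.length = n → (xs.map ρ).prod = 0) (hk : n ≤ k) {f : M}
    (hf : f ∈ repProdMul ρ k) : f = 0 := by
  obtain ⟨zs, rfl, c, rfl⟩ := hf
  rw [← List.take_append_drop n zs, List.map_append, List.prod_append,
    hn _ (List.length_take_of_le hk), zero_mul, zero_mul]

end RepProdMul

section TensorFiltration

variable (ρ : L →ₗ[K] Module.End K V) (τ : L →ₗ[K] Module.End K W)

def tensorRepFiltration (k : ℕ) : Submodule K (Module.End K (V ⊗[K] W)) :=
  Submodule.span K {t | ∃ i j, i + j = k ∧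
    ∃ f ∈ repProdMul ρ i, ∃ g ∈ repProdMul τ j, t = TensorProduct.map f g}

variable {ρ τ} {α : L →ₗ[K] L} {β : Module.End K V} {γ : Module.End K W}

lemma tpRep_mul_mem_tensorRepFiltration (hρm : ∀ x, ρ (α x) * β = β * ρ x)
    (hτm : ∀ x, τ (α x) * γ = γ * τ x) (x : L) {k : ℕ} {t : Module.End K (V ⊗[K] W)}
    (ht : t ∈ tensorRepFiltration ρ τ k) :
    tpRep ρ τ β γ x * t ∈ tensorRepFiltration ρ τ (k + 1) := by
  induction ht using Submodule.span_induction with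
  | mem t ht =>
    obtain ⟨i, j, rfl, f, hf, g, hg, rfl⟩ := ht
    rw [tpRep, add_mul, ← TensorProduct.map_mul, ← TensorProduct.map_mul]
    apply add_mem <;> apply Submodule.subset_span
    · exact ⟨i + 1, j, by omega, _, mul_mem_repProdMul_succ x hf, _,
        mul_mem_repProdMul hτm hg, rfl⟩
    · exact ⟨i, j + 1, by omega, _, mul_mem_repProdMul hρm hf, _,
        mul_mem_repProdMul_succ x hg, rfl⟩
  | zero => simp
  | add t s _ _ ht hs => rw [mul_add]; exact add_mem ht hs
  | smul a t _ ht => rw [mul_smul_comm]; exact Submodule.smul_mem _ a ht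

lemma prod_map_tpRep_mem_tensorRepFiltration (hρm : ∀ x, ρ (α x) * β = β * ρ x)
    (hτm : ∀ x, τ (α x) * γ = γ * τ x) (xs : List L) :
    (xs.map (tpRep ρ τ β γ)).prod ∈ tensorRepFiltration ρ τ xs.length := by
  induction xs with
  | nil =>
    exact Submodule.subset_span ⟨0, 0, rfl, 1, one_mem_repProdMul_zero, 1,
      one_mem_repProdMul_zero, TensorProduct.map_one.symm⟩
  | cons x xs ih =>
    rw [List.map_cons, List.prod_cons]
    exact tpRep_mul_mem_tensorRepFiltration hρm hτm x ih

lemma tensorRepFiltration_eq_bot {n m : ℕ}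
    (hn : ∀ xs : List L, xs.length = n → (xs.map ρ).prod = 0)
    (hm : ∀ xs : List L, xs.length = m → (xs.map τ).prod = 0) :
    tensorRepFiltration ρ τ (n + m - 1) = ⊥ := by
  refine Submodule.span_eq_bot.2 ?_
  rintro t ⟨i, j, hij, f, hf, g, hg, rfl⟩
  by_cases hi : n ≤ i
  · rw [eq_zero_of_mem_repProdMul hn hi hf, TensorProduct.map_zero_left]
  · rw [eq_zero_of_mem_repProdMul hm (by omega) hg, TensorProduct.map_zero_right]

end TensorFiltration

theorem stmt8_general (α : L →ₗ[K] L)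
    (ρ : L →ₗ[K] Module.End K V) (β : Module.End K V)
    (τ : L →ₗ[K] Module.End K W) (γ : Module.End K W)
    (hρm : ∀ x : L, ρ (α x) ∘ₗ β = β ∘ₗ ρ x)
    (hτm : ∀ x : L, τ (α x) ∘ₗ γ = γ ∘ₗ τ x)
    (n m : ℕ)
    (hn : ∀ xs : List L, xs.length = n → (xs.map (fun x => ρ x)).prod = 0)
    (hm : ∀ xs : List L, xs.length = m → (xs.map (fun x => τ x)).prod = 0) :
    ∀ xs : List L, xs.length = n + m - 1 →
      (xs.map (tpRep ρ τ β γ)).prod = 0 := by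
  intro xs hxs
  have hmem := prod_map_tpRep_mem_tensorRepFiltration (fun x => hρm x) (fun x => hτm x) xs
  rwa [hxs, tensorRepFiltration_eq_bot hn hm, Submodule.mem_bot] at hmem

/-- The tensor product of two nilpotent multiplicative representations, of
nilindices `n` and `m`, is nilpotent of index at most `n + m - 1`. -/
theorem stmt8 (br : L →ₗ[K] L →ₗ[K] L) (α : L →ₗ[K] L)
    (hanti : ∀ x y : L, br y x = - br x y)
    (hjac : ∀ x y z : L,
      br (br x y) (α z) + br (br z x) (α y) + br (br y z) (α x) = 0)
    (ρ : L →ₗ[K] Module.End K V) (β : Module.End K V)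
    (τ : L →ₗ[K] Module.End K W) (γ : Module.End K W)
    (hρ : ∀ x y : L, ρ (br x y) ∘ₗ β = ρ (α x) ∘ₗ ρ y - ρ (α y) ∘ₗ ρ x)
    (hρm : ∀ x : L, ρ (α x) ∘ₗ β = β ∘ₗ ρ x)
    (hτ : ∀ x y : L, τ (br x y) ∘ₗ γ = τ (α x) ∘ₗ τ y - τ (α y) ∘ₗ τ x)
    (hτm : ∀ x : L, τ (α x) ∘ₗ γ = γ ∘ₗ τ x)
    (n m : ℕ)
    (hn : ∀ xs : List L, xs.length = n → (xs.map (fun x => ρ x)).prod = 0)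
    (hm : ∀ xs : List L, xs.length = m → (xs.map (fun x => τ x)).prod = 0) :
    ∀ xs : List L, xs.length = n + m - 1 →
      (xs.map (tpRep ρ τ β γ)).prod = 0 :=
  stmt8_general α ρ β τ γ hρm hτm n m hn hm
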